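/- arXiv:1505.04848 — 2 statements merged into one kernel-verified Lean document; each statement's English description precedes it below -/
import Mathlib

section
/- Let n ≥ 2, R > 0, T > 0, λ = T/(2π), and let X_0, …, X_{n−1} : ℝ → ℝ³ be twice differentiable T-periodic functions with ‖X_j(t)‖ = R and |X_i(t)·X_j(t)| < R² for all t and all i ≠ j, satisfying the curved n-body equations X_j''(t) = Σ_{i≠j} [R³ X_i(t) − R (X_i(t)·X_j(t)) X_j(t)] / [R⁴ − (X_i(t)·X_j(t))²]^{3/2} − R^{−2} ‖X_j'(t)‖² X_j(t) for all t and all j. Then the functions Y_j(t) := λ^{−2/3} X_j(λ t) are 2π-periodic, satisfy ‖Y_j(t)‖ = λ^{−2/3} R, and satisfy the same equations with R replaced by R' = λ^{−2/3} R. -/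
open Real Finset RealInnerProductSpace

/-- rescaling a `T`-periodic solution of the curved `n`-body problem on the
sphere of radius `R` gives a `2π`-periodic solution on the sphere of radius `λ^{-2/3} R`. -/
theorem spherical_nbody_rescaling
    (n : ℕ) (hn : 2 ≤ n) (R T : ℝ) (hR : 0 < R) (hT : 0 < T)
    (lam : ℝ) (hlam : lam = T / (2 * π))
    (X : Fin n → ℝ → EuclideanSpace ℝ (Fin 3))
    (hper : ∀ j t, X j (t + T) = X j t)
    (hsphere : ∀ j t, ‖X j t‖ = R)
    (hsep : ∀ i j, i ≠ j → ∀ t : ℝ, |⟪X i t, X j t⟫| < R ^ 2)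
    (hdiff1 : ∀ j t, DifferentiableAt ℝ (X j) t)
    (hdiff2 : ∀ j t, DifferentiableAt ℝ (deriv (X j)) t)
    (hode : ∀ j t, deriv (deriv (X j)) t =
      (∑ i ∈ Finset.univ.erase j,
        ((R ^ 4 - ⟪X i t, X j t⟫ ^ 2) ^ ((3 : ℝ) / 2))⁻¹ •
          (R ^ 3 • X i t - (R * ⟪X i t, X j t⟫) • X j t)) -
      ((R ^ 2)⁻¹ * ‖deriv (X j) t‖ ^ 2) • X j t)
    (Y : Fin n → ℝ → EuclideanSpace ℝ (Fin 3))
    (hY : ∀ j t, Y j t = (lam ^ (-(2 / 3) : ℝ)) • X j (lam * t))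
    (R' : ℝ) (hR' : R' = lam ^ (-(2 / 3) : ℝ) * R) :
    (∀ j t, Y j (t + 2 * π) = Y j t) ∧
    (∀ j t, ‖Y j t‖ = R') ∧
    (∀ j t, deriv (deriv (Y j)) t =
      (∑ i ∈ Finset.univ.erase j,
        ((R' ^ 4 - ⟪Y i t, Y j t⟫ ^ 2) ^ ((3 : ℝ) / 2))⁻¹ •
          (R' ^ 3 • Y i t - (R' * ⟪Y i t, Y j t⟫) • Y j t)) -
      ((R' ^ 2)⁻¹ * ‖deriv (Y j) t‖ ^ 2) • Y j t) := by
  have hpi : 0 < π := Real.pi_pos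
  have hlam0 : 0 < lam := by rw [hlam]; positivity
  set c : ℝ := lam ^ (-(2 / 3) : ℝ) with hcdef
  have hc0 : 0 < c := Real.rpow_pos_of_pos hlam0 _
  have hc3 : c ^ 3 = lam ^ (-2 : ℝ) := by
    rw [hcdef, ← Real.rpow_natCast (lam ^ (-(2 / 3) : ℝ)) 3, ← Real.rpow_mul hlam0.le]
    norm_num
  have hlam2 : c ^ 3 * lam ^ 2 = 1 := by
    rw [hc3, ← Real.rpow_natCast lam 2, ← Real.rpow_add hlam0]
    norm_num
  have hc6 : (c ^ 4 : ℝ) ^ ((3 : ℝ) / 2) = c ^ 6 := by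
    rw [← Real.rpow_natCast c 4, ← Real.rpow_mul hc0.le,
      show ((4 : ℕ) : ℝ) * (3 / 2) = ((6 : ℕ) : ℝ) by norm_num, Real.rpow_natCast]
  have hYfun : ∀ j, Y j = fun s => c • X j (lam * s) := fun j => funext (hY j)
  have hlin : ∀ t : ℝ, HasDerivAt (fun s : ℝ => lam * s) lam t := by
    intro t; simpa using (hasDerivAt_id t).const_mul lam
  have hd1 : ∀ j t, HasDerivAt (Y j) ((c * lam) • deriv (X j) (lam * t)) t := by
    intro j t
    have h2 : HasDerivAt (fun s => X j (lam * s)) (lam • deriv (X j) (lam * t)) t :=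
      (hdiff1 j (lam * t)).hasDerivAt.scomp t (hlin t)
    have h3 : HasDerivAt (fun s => c • X j (lam * s)) _ t := h2.const_smul c
    rw [hYfun j]
    simpa [smul_smul] using h3
  have hdY : ∀ j, deriv (Y j) = fun t => (c * lam) • deriv (X j) (lam * t) :=
    fun j => funext fun t => (hd1 j t).deriv
  have hd2 : ∀ j t, deriv (deriv (Y j)) t = (c * lam ^ 2) • deriv (deriv (X j)) (lam * t) := by
    intro j t
    have h2 : HasDerivAt (fun s => deriv (X j) (lam * s))
        (lam • deriv (deriv (X j)) (lam * t)) t :=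
      (hdiff2 j (lam * t)).hasDerivAt.scomp t (hlin t)
    have h3 : HasDerivAt (fun s => (c * lam) • deriv (X j) (lam * s)) _ t :=
      h2.const_smul (c * lam)
    rw [hdY j]
    rw [h3.deriv, smul_smul]
    congr 1
    ring
  refine ⟨?_, ?_, ?_⟩
  · intro j t
    have hTeq : lam * (t + 2 * π) = lam * t + T := by
      rw [hlam]; field_simp
    rw [hY j, hY j, hTeq, hper j]
  · intro j t
    rw [hY j, norm_smul, hsphere j, Real.norm_eq_abs, abs_of_pos hc0, hR']
  · intro j t
    rw [hd2 j t, hode j (lam * t), smul_sub, Finset.smul_sum]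
    congr 1
    · apply Finset.sum_congr rfl
      intro i hi
      have hij : i ≠ j := (Finset.mem_erase.mp hi).1
      rw [hY i t, hY j t]
      rw [real_inner_smul_left, real_inner_smul_right]
      set s : ℝ := ⟪X i (lam * t), X j (lam * t)⟫ with hs
      have hsep' := hsep i j hij (lam * t)
      have hpos : 0 < R ^ 4 - s ^ 2 := by
        nlinarith [abs_nonneg s, sq_abs s, sq_nonneg (R ^ 2)]
      have hA : R' ^ 4 - (c * (c * s)) ^ 2 = c ^ 4 * (R ^ 4 - s ^ 2) := by
        rw [hR']; ring
      rw [hA, Real.mul_rpow (by positivity) hpos.le, hc6]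
      have hA0 : ((R ^ 4 - s ^ 2) ^ ((3 : ℝ) / 2) : ℝ) ≠ 0 :=
        (Real.rpow_pos_of_pos hpos _).ne'
      have hv : R' ^ 3 • (c • X i (lam * t)) - (R' * (c * (c * s))) • (c • X j (lam * t))
          = (c ^ 4 : ℝ) • (R ^ 3 • X i (lam * t) - (R * s) • X j (lam * t)) := by
        rw [hR']; module
      rw [hv, smul_smul, smul_smul]
      congr 1
      field_simp
      linear_combination hlam2
    · rw [hY j t, hdY j]
      have hn : ‖(c * lam) • deriv (X j) (lam * t)‖ ^ 2
          = (c * lam) ^ 2 * ‖deriv (X j) (lam * t)‖ ^ 2 := by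
        rw [norm_smul, mul_pow, Real.norm_eq_abs, sq_abs]
      rw [hn, hR', smul_smul, smul_smul]
      congr 1
      field_simp
end

section
/- Let R > 0 and z, ξ ∈ ℂ, and set X = P_R^{−1}(z), Y = P_R^{−1}(ξ). Define Θ = (R² + |z|²)² (R² + |ξ|²)² − [4R² Re(z·conj(ξ)) + (|z|² − R²)(|ξ|² − R²)]². Then (R² + |z|²)² (R² + |ξ|²)² · (R⁴ − (X·Y)²) = R⁴ Θ. -/
open Real RealInnerProductSpace

/-- Inverse stereographic projection from the plane to the sphere of radius `R`. -/
noncomputable def invStereo (R : ℝ) (z : ℂ) : EuclideanSpace ℝ (Fin 3) :=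
  (EuclideanSpace.equiv (Fin 3) ℝ).symm
    ((R ^ 2 + ‖z‖ ^ 2)⁻¹ •
      ![2 * R ^ 2 * z.re, 2 * R ^ 2 * z.im, -R ^ 3 + R * ‖z‖ ^ 2])

/-- the denominator `R⁴ − (X·Y)²` of the curved `n`-body equations in
terms of the quantity `Θ` appearing in the equations projected to the plane. -/
theorem theta_identity (R : ℝ) (hR : 0 < R) (z ξ : ℂ)
    (X Y : EuclideanSpace ℝ (Fin 3)) (hX : X = invStereo R z) (hY : Y = invStereo R ξ)
    (Θ : ℝ)
    (hΘ : Θ = (R ^ 2 + ‖z‖ ^ 2) ^ 2 * (R ^ 2 + ‖ξ‖ ^ 2) ^ 2 -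
      (4 * R ^ 2 * (z * (starRingEnd ℂ) ξ).re +
        (‖z‖ ^ 2 - R ^ 2) * (‖ξ‖ ^ 2 - R ^ 2)) ^ 2) :
    (R ^ 2 + ‖z‖ ^ 2) ^ 2 * (R ^ 2 + ‖ξ‖ ^ 2) ^ 2 *
        (R ^ 4 - ⟪X, Y⟫ ^ 2) = R ^ 4 * Θ := by
  subst hX hY hΘ
  have hz : (‖z‖) ^ 2 = z.re ^ 2 + z.im ^ 2 := by
    rw [Complex.sq_norm, Complex.normSq_apply]; ring
  have hξ : (‖ξ‖) ^ 2 = ξ.re ^ 2 + ξ.im ^ 2 := by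
    rw [Complex.sq_norm, Complex.normSq_apply]; ring
  have hz0 : R ^ 2 + ‖z‖ ^ 2 ≠ 0 := by positivity
  have hξ0 : R ^ 2 + ‖ξ‖ ^ 2 ≠ 0 := by positivity
  simp only [invStereo, EuclideanSpace.inner_eq_star_dotProduct]
  simp [dotProduct, Fin.sum_univ_three, Complex.mul_re, Complex.conj_re,
    Complex.conj_im]
  simp only [hz, hξ] at hz0 hξ0 ⊢
  field_simp
  ring
end
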